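/- arXiv:1005.4404 — 5 statements merged into one kernel-verified Lean document; each statement's English description precedes it below -/
import Mathlib

section
/- Let r ∈ (1, √2] and let φ_r : M₂(ℂ) → M₂(ℂ) be the Schur multiplication map φ_r(A) = M • A (entrywise product) where M is the 2×2 matrix with diagonal entries 1, (1,2)-entry r(1+i)/2, and (2,1)-entry r(1−i)/2. Then for every t ≥ 0, the map φ_r(I + t φ_r)^{-1} is completely positive if and only if t ≤ (2 − r²)/(2r(r−1)). In particular, φ_r is completely positive but not q-positive. -/
open Matrix Filter
open scoped Matrix.Norms.L2Operator ComplexOrder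

noncomputable section

def IsCompletelyPositive {n : Type*} [Fintype n] [DecidableEq n]
    (φ : Matrix n n ℂ →ₗ[ℂ] Matrix n n ℂ) : Prop :=
  ∀ (k : ℕ) (A : Matrix (Fin k × n) (Fin k × n) ℂ), A.PosSemidef →
    Matrix.PosSemidef (Matrix.of fun p q : Fin k × n =>
      φ (Matrix.of fun a b => A (p.1, a) (q.1, b)) p.2 q.2)

def Inv2 {n : Type*} [Fintype n] [DecidableEq n]
    (f g : Matrix n n ℂ →ₗ[ℂ] Matrix n n ℂ) : Prop :=
  f ∘ₗ g = LinearMap.id ∧ g ∘ₗ f = LinearMap.id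

def QPositive {n : Type*} [Fintype n] [DecidableEq n]
    (φ : Matrix n n ℂ →ₗ[ℂ] Matrix n n ℂ) : Prop :=
  (∀ c : ℝ, c < 0 → ¬ Module.End.HasEigenvalue φ (c : ℂ)) ∧
  ∀ t : ℝ, 0 ≤ t → ∃ ψ, Inv2 (LinearMap.id + (t : ℂ) • φ) ψ ∧
    IsCompletelyPositive (φ ∘ₗ ψ)

def toC {n : Type*} [Fintype n] [DecidableEq n]
    (φ : Matrix n n ℂ →ₗ[ℂ] Matrix n n ℂ) : Matrix n n ℂ →L[ℂ] Matrix n n ℂ :=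
  LinearMap.toContinuousLinearMap φ

def conjMap {n : Type*} [Fintype n] [DecidableEq n]
    (φ : Matrix n n ℂ →ₗ[ℂ] Matrix n n ℂ) (U : Matrix n n ℂ) :
    Matrix n n ℂ →ₗ[ℂ] Matrix n n ℂ where
  toFun A := Uᴴ * φ (U * A * Uᴴ) * U
  map_add' A B := by simp [Matrix.mul_add, Matrix.add_mul]
  map_smul' c A := by simp [Matrix.mul_smul, Matrix.smul_mul]

/-- Schur (Hadamard) multiplication by a fixed matrix, as a linear map. -/
def schurMap {n : Type*} [Fintype n] [DecidableEq n] (M : Matrix n n ℂ) :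
    Matrix n n ℂ →ₗ[ℂ] Matrix n n ℂ where
  toFun A := Matrix.of fun i j => M i j * A i j
  map_add' A B := by ext i j; simp [Matrix.add_apply]; ring
  map_smul' c A := by ext i j; simp [Matrix.smul_apply]; ring

/-- A state on `Mₙ(ℂ)`. -/
def IsState {n : Type*} [Fintype n] [DecidableEq n]
    (ρ : Matrix n n ℂ →ₗ[ℂ] ℂ) : Prop :=
  ρ 1 = 1 ∧ ∀ A, A.PosSemidef → ∃ r : ℝ, 0 ≤ r ∧ ρ A = (r : ℂ)

def IsProjection {n : Type*} [Fintype n] [DecidableEq n] (P : Matrix n n ℂ) : Prop :=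
  P.IsHermitian ∧ P * P = P

/-- φ ≥_q ψ. -/
def QSub {n : Type*} [Fintype n] [DecidableEq n]
    (φ ψ : Matrix n n ℂ →ₗ[ℂ] Matrix n n ℂ) : Prop :=
  ∀ t : ℝ, 0 ≤ t → ∀ χ₁ χ₂, Inv2 (LinearMap.id + (t : ℂ) • φ) χ₁ →
    Inv2 (LinearMap.id + (t : ℂ) • ψ) χ₂ →
    IsCompletelyPositive (φ ∘ₗ χ₁ - ψ ∘ₗ χ₂)

def QPure {n : Type*} [Fintype n] [DecidableEq n]
    (φ : Matrix n n ℂ →ₗ[ℂ] Matrix n n ℂ) : Prop :=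
  QPositive φ ∧ ∀ ψ, QPositive ψ → QSub φ ψ →
    (ψ = 0 ∨ ∃ s : ℝ, 0 ≤ s ∧ ∀ χ, Inv2 (LinearMap.id + (s : ℂ) • φ) χ → ψ = φ ∘ₗ χ)

/-- The block map `[[A,B],[C,D]] ↦ [[φ(A), σ(B)],[σ*(C), Ψ(D)]]`. -/
def cornerMap {n k : Type*} [Fintype n] [Fintype k] [DecidableEq n] [DecidableEq k]
    (φ : Matrix n n ℂ →ₗ[ℂ] Matrix n n ℂ) (Ψ : Matrix k k ℂ →ₗ[ℂ] Matrix k k ℂ)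
    (σ : Matrix n k ℂ →ₗ[ℂ] Matrix n k ℂ) :
    Matrix (n ⊕ k) (n ⊕ k) ℂ →ₗ[ℂ] Matrix (n ⊕ k) (n ⊕ k) ℂ where
  toFun M := Matrix.fromBlocks (φ M.toBlocks₁₁) (σ M.toBlocks₁₂)
      ((σ (M.toBlocks₂₁)ᴴ)ᴴ) (Ψ M.toBlocks₂₂)
  map_add' M N := by
    have h11 : (M + N).toBlocks₁₁ = M.toBlocks₁₁ + N.toBlocks₁₁ := rfl
    have h12 : (M + N).toBlocks₁₂ = M.toBlocks₁₂ + N.toBlocks₁₂ := rfl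
    have h21 : (M + N).toBlocks₂₁ = M.toBlocks₂₁ + N.toBlocks₂₁ := rfl
    have h22 : (M + N).toBlocks₂₂ = M.toBlocks₂₂ + N.toBlocks₂₂ := rfl
    simp only [h11, h12, h21, h22, map_add, conjTranspose_add, Matrix.fromBlocks_add]
  map_smul' c M := by
    have h11 : (c • M).toBlocks₁₁ = c • M.toBlocks₁₁ := rfl
    have h12 : (c • M).toBlocks₁₂ = c • M.toBlocks₁₂ := rfl
    have h21 : (c • M).toBlocks₂₁ = c • M.toBlocks₂₁ := rfl
    have h22 : (c • M).toBlocks₂₂ = c • M.toBlocks₂₂ := rfl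
    simp only [h11, h12, h21, h22, RingHom.id_apply, _root_.map_smul,
      conjTranspose_smul, star_star, Matrix.fromBlocks_smul]

/-- The diagonal-part map on `M₂(ℂ)`. -/
def diagMap : Matrix (Fin 2) (Fin 2) ℂ →ₗ[ℂ] Matrix (Fin 2) (Fin 2) ℂ where
  toFun A := Matrix.diagonal fun i => A i i
  map_add' A B := by ext i j; by_cases h : i = j <;> simp [Matrix.diagonal, h]
  map_smul' c A := by ext i j; by_cases h : i = j <;> simp [Matrix.diagonal, h]


/-!
Schur maps compose by the Hadamard product, so `(I + t φ_M)⁻¹` is the Schur map of the entrywise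
inverses `(1 + t M i j)⁻¹` and `φ_M (I + t φ_M)⁻¹` is the Schur map of `M i j / (1 + t M i j)`.
This matrix has constant diagonal `1 / (1 + t)` and off-diagonal entry `b / (1 + t b)`, where
`b = r (1 + i) / 2`; it is positive semidefinite iff `‖b‖ (1 + t) ≤ ‖1 + t b‖`. Squaring, the
quadratic terms in `t` cancel and the condition becomes `2 r (r - 1) t ≤ 2 - r²`. It holds at
`t = 0` because `r ≤ √2` and fails for large `t` because `r > 1`.
-/

section SchurMap

variable {n : Type*} [Fintype n] [DecidableEq n]

lemma schurMap_apply (M A : Matrix n n ℂ) : schurMap M A = M ⊙ A := rfl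

lemma schurMap_comp_schurMap (M N : Matrix n n ℂ) :
    schurMap M ∘ₗ schurMap N = schurMap (M ⊙ N) := by
  ext A : 1
  simp only [LinearMap.comp_apply, schurMap_apply, hadamard_assoc]

theorem isCompletelyPositive_schurMap_iff {N : Matrix n n ℂ} :
    IsCompletelyPositive (schurMap N) ↔ N.PosSemidef := by
  constructor
  · intro hN
    have hones := hN 1 _ (posSemidef_vecMulVec_self_star (fun _ : Fin 1 × n => (1 : ℂ)))
    convert hones.submatrix (fun i : n => ((0 : Fin 1), i)) using 1
    ext i j
    simp [schurMap_apply, vecMulVec_apply]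
  · intro hN k A hA
    exact (hN.submatrix (Prod.snd : Fin k × n → n)).hadamard hA

lemma Inv2.right_unique {f g g' : Matrix n n ℂ →ₗ[ℂ] Matrix n n ℂ}
    (h : Inv2 f g) (h' : Inv2 f g') : g = g' := by
  calc g = g ∘ₗ (f ∘ₗ g') := by rw [h'.1, LinearMap.comp_id]
    _ = g' := by rw [← LinearMap.comp_assoc, h.2, LinearMap.id_comp]

lemma inv2_id_add_smul_schurMap {M : Matrix n n ℂ} {t : ℂ} (h : ∀ i j, 1 + t * M i j ≠ 0) :
    Inv2 (LinearMap.id + t • schurMap M) (schurMap (of fun i j => (1 + t * M i j)⁻¹)) := by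
  constructor <;> ext A i j : 3 <;> simp [schurMap_apply] <;> field_simp [h i j]

end SchurMap

lemma star_dotProduct_mulVec_fin_two (a : ℝ) (b : ℂ) (x : Fin 2 → ℂ) :
    star x ⬝ᵥ !![(a : ℂ), b; star b, (a : ℂ)] *ᵥ x
      = ((a * (‖x 0‖ ^ 2 + ‖x 1‖ ^ 2) + 2 * (star (x 0) * b * x 1).re : ℝ) : ℂ) := by
  apply Complex.ext <;>
    simp [dotProduct, mulVec, Fin.sum_univ_two, Complex.sq_norm, Complex.normSq_apply] <;> ring

lemma posSemidef_fin_two_iff_norm_le (a : ℝ) (b : ℂ) :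
    (!![(a : ℂ), b; star b, (a : ℂ)]).PosSemidef ↔ ‖b‖ ≤ a := by
  constructor
  · intro h
    have ha : 0 ≤ a := by simpa using h.diag_nonneg (i := 0)
    have hx := h.dotProduct_mulVec_nonneg ![b, -(‖b‖ : ℂ)]
    have hw : (star b * b * -(‖b‖ : ℂ)).re = -‖b‖ ^ 3 := by
      rw [Complex.star_def, Complex.conj_mul']
      norm_cast
      ring
    simp only [star_dotProduct_mulVec_fin_two, Complex.zero_le_real, cons_val_zero, cons_val_one,
      norm_neg, Complex.norm_real, Real.norm_eq_abs, abs_norm, hw] at hx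
    by_contra! hlt
    have hb : 0 < ‖b‖ := ha.trans_lt hlt
    nlinarith [mul_pos (pow_pos hb 2) (sub_pos.mpr hlt)]
  · intro hle
    refine posSemidef_iff_dotProduct_mulVec.mpr ⟨?_, fun x => ?_⟩
    · ext i j
      fin_cases i <;> fin_cases j <;> simp
    · rw [star_dotProduct_mulVec_fin_two, Complex.zero_le_real]
      have hw : -(‖x 0‖ * ‖b‖ * ‖x 1‖) ≤ (star (x 0) * b * x 1).re := by
        simpa using neg_le_of_abs_le (Complex.abs_re_le_norm (star (x 0) * b * x 1))
      nlinarith [mul_nonneg (sub_nonneg.mpr hle) (add_nonneg (sq_nonneg ‖x 0‖) (sq_nonneg ‖x 1‖)),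
        mul_nonneg (norm_nonneg b) (sq_nonneg (‖x 0‖ - ‖x 1‖))]

theorem isCompletelyPositive_schurMap_comp_inverse_iff {b : ℂ} {t : ℝ} (ht : 0 ≤ t)
    (hb : 1 + t * b ≠ 0) {ψ : Matrix (Fin 2) (Fin 2) ℂ →ₗ[ℂ] Matrix (Fin 2) (Fin 2) ℂ}
    (hψ : Inv2 (LinearMap.id + (t : ℂ) • schurMap !![1, b; star b, 1]) ψ) :
    IsCompletelyPositive (schurMap !![1, b; star b, 1] ∘ₗ ψ) ↔ ‖b‖ * (1 + t) ≤ ‖1 + t * b‖ := by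
  set M : Matrix (Fin 2) (Fin 2) ℂ := !![1, b; star b, 1]
  have h1t : 0 < 1 + t := by positivity
  have hne : ∀ i j, 1 + (t : ℂ) * M i j ≠ 0 := by
    have h1t' : (1 : ℂ) + t ≠ 0 := by exact_mod_cast h1t.ne'
    have hb' : 1 + (t : ℂ) * starRingEnd ℂ b ≠ 0 := by
      simpa [Complex.conj_ofReal] using (star_ne_zero.mpr hb)
    intro i j
    fin_cases i <;> fin_cases j <;> simp [M, h1t', hb, hb']
  have hprod : M ⊙ of (fun i j => (1 + (t : ℂ) * M i j)⁻¹) =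
      !![(((1 + t)⁻¹ : ℝ) : ℂ), b / (1 + t * b);
        star (b / (1 + t * b)), (((1 + t)⁻¹ : ℝ) : ℂ)] := by
    ext i j
    fin_cases i <;> fin_cases j <;> simp [M, div_eq_mul_inv, Complex.conj_ofReal]
  rw [hψ.right_unique (inv2_id_add_smul_schurMap hne), schurMap_comp_schurMap, hprod,
    isCompletelyPositive_schurMap_iff, posSemidef_fin_two_iff_norm_le, norm_div,
    div_le_iff₀ (norm_pos_iff.mpr hb), ← div_eq_inv_mul, le_div_iff₀ h1t]

lemma norm_mul_one_add_le_norm_one_add_mul_iff {r t : ℝ} (hr : 1 < r) (ht : 0 ≤ t) :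
    ‖(r : ℂ) * (1 + Complex.I) / 2‖ * (1 + t) ≤ ‖1 + t * ((r : ℂ) * (1 + Complex.I) / 2)‖ ↔
      t ≤ (2 - r ^ 2) / (2 * r * (r - 1)) := by
  have hb : ‖(r : ℂ) * (1 + Complex.I) / 2‖ ^ 2 = r ^ 2 / 2 := by
    rw [Complex.sq_norm, Complex.normSq_apply]
    simp
    ring
  have hz : ‖1 + t * ((r : ℂ) * (1 + Complex.I) / 2)‖ ^ 2 =
      (1 + t * r / 2) ^ 2 + (t * r / 2) ^ 2 := by
    rw [Complex.sq_norm, Complex.normSq_apply]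
    simp
    ring
  rw [← sq_le_sq₀ (by positivity) (norm_nonneg _), mul_pow, hb, hz,
    le_div_iff₀ (by nlinarith)]
  constructor <;> intro h <;> linarith

/-- for `r ∈ (1, √2]` and the Schur map `φ_r`, the map
`φ_r(I + t φ_r)⁻¹` is completely positive iff `t ≤ (2 - r²)/(2r(r-1))`;
in particular `φ_r` is completely positive but not q-positive. -/
theorem stmt_0 (r : ℝ) (hr : r ∈ Set.Ioc 1 (Real.sqrt 2))
    (M : Matrix (Fin 2) (Fin 2) ℂ)
    (hM : M = !![1, (r : ℂ) * (1 + Complex.I) / 2;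
                 (r : ℂ) * (1 - Complex.I) / 2, 1]) :
    (∀ t : ℝ, 0 ≤ t → ∀ ψ, Inv2 (LinearMap.id + (t : ℂ) • schurMap M) ψ →
      (IsCompletelyPositive (schurMap M ∘ₗ ψ) ↔ t ≤ (2 - r ^ 2) / (2 * r * (r - 1)))) ∧
    IsCompletelyPositive (schurMap M) ∧ ¬ QPositive (schurMap M) := by
  obtain ⟨hr1, hr2⟩ := hr
  set t₀ := (2 - r ^ 2) / (2 * r * (r - 1))
  set b : ℂ := (r : ℂ) * (1 + Complex.I) / 2
  have hMb : M = !![1, b; star b, 1] := by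
    subst hM
    ext i j
    fin_cases i <;> fin_cases j <;> simp [b, Complex.ext_iff]
  have hresolvent : ∀ t : ℝ, 0 ≤ t → ∀ ψ, Inv2 (LinearMap.id + (t : ℂ) • schurMap M) ψ →
      (IsCompletelyPositive (schurMap M ∘ₗ ψ) ↔ t ≤ t₀) := by
    intro t ht ψ hψ
    have hb : 1 + t * b ≠ 0 := fun h => by
      have hre := congrArg Complex.re h
      simp [b] at hre
      nlinarith
    rw [hMb] at hψ ⊢
    rw [isCompletelyPositive_schurMap_comp_inverse_iff ht hb hψ,
      norm_mul_one_add_le_norm_one_add_mul_iff hr1 ht]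
  have ht₀ : 0 ≤ t₀ := by
    have : r ^ 2 ≤ 2 := (Real.le_sqrt' (by linarith)).mp hr2
    apply div_nonneg <;> nlinarith
  refine ⟨hresolvent, ?_, ?_⟩
  · simpa using (hresolvent 0 le_rfl LinearMap.id (by simp [Inv2])).2 ht₀
  · rintro ⟨-, hq⟩
    obtain ⟨ψ, hψ, hcp⟩ := hq (t₀ + 1) (by linarith)
    linarith [(hresolvent _ (by linarith) ψ hψ).1 hcp]
end
end

section
/- Let φ : Mₙ(ℂ) → Mₙ(ℂ) be a nonzero q-positive map such that ‖tφ(I + tφ)^{-1}‖ < 1 for all t > 0. Then the maps tφ(I + tφ)^{-1} converge in norm as t → ∞ to a unique map L_φ, and L_φ is completely positive, has norm 1, satisfies L_φ ∘ φ = φ ∘ L_φ = φ, L_φ² = L_φ, range(L_φ) = range(φ), and ker(L_φ) = ker(φ). -/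
open Matrix Filter
open scoped Matrix.Norms.L2Operator ComplexOrder

noncomputable section

/-!
The bound on `tφ(I + tφ)⁻¹` forces `ker φ² = ker φ`: if `φ² x = 0` then `tφ(I + tφ)⁻¹ x = t φ x`,
which would grow linearly in `t`. Hence the space splits as `range φ ⊕ ker φ`, and `L` is the
projection onto `range φ` along `ker φ`. Factoring `L = φ P`, the identity
`tφ(I + tφ)⁻¹ - L = -φ(I + tφ)⁻¹ P` bounds the distance to `L` by `‖P‖ / t`. Complete positivity
passes to the limit because positive semidefinite matrices form a closed set, and a nonzero
idempotent of norm at most `1` has norm exactly `1`.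
-/

open Topology

section ResolventAlgebra

variable {𝕜 A : Type*} [CommRing 𝕜] [Ring A] [Algebra 𝕜 A] {a r l p : A} {c : 𝕜}

theorem commute_of_resolvent (h₁ : (1 + c • a) * r = 1) (h₂ : r * (1 + c • a) = 1) :
    Commute a r :=
  ((Commute.one_right a).add_right ((Commute.refl a).smul_right c)).units_inv_right
    (u := ⟨1 + c • a, r, h₁, h₂⟩)

theorem smul_mul_resolvent_sub (h₁ : (1 + c • a) * r = 1) (h₂ : r * (1 + c • a) = 1)
    (hl : a * l = a) (hp : a * p = l) :
    c • (a * r) - l = -(a * r * p) := by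
  have hres : (1 + c • a) * (a * r) = a := by
    rw [← mul_assoc, ((Commute.one_left a).add_left ((Commute.refl a).smul_left c)).eq,
      mul_assoc, h₁, mul_one]
  calc c • (a * r) - l = r * ((1 + c • a) * (c • (a * r) - l)) := by
        rw [← mul_assoc, h₂, one_mul]
    _ = r * -l := by
        rw [mul_sub, mul_smul_comm, hres, add_mul, one_mul, smul_mul_assoc, hl,
          sub_add_cancel_right]
    _ = -(a * r * p) := by
        rw [← hp, mul_neg, ← mul_assoc, (commute_of_resolvent h₁ h₂).eq]

end ResolventAlgebra

section BoundedResolvent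

variable {𝕜 : Type*} [RCLike 𝕜]

theorem norm_le_div_of_norm_smul_le {A : Type*} [SeminormedAddCommGroup A] [NormedSpace 𝕜 A]
    {x : A} {t C : ℝ} (ht : 0 < t) (h : ‖(t : 𝕜) • x‖ ≤ C) : ‖x‖ ≤ C / t := by
  rw [norm_smul, RCLike.norm_ofReal, abs_of_pos ht] at h
  rw [le_div_iff₀ ht]
  linarith

theorem tendsto_smul_mul_resolvent {A : Type*} [NormedRing A] [NormedAlgebra 𝕜 A]
    {a l p : A} {R : ℝ → A} {C : ℝ}
    (hR : ∀ t : ℝ, 0 < t → (1 + (t : 𝕜) • a) * R t = 1 ∧ R t * (1 + (t : 𝕜) • a) = 1)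
    (hbdd : ∀ t : ℝ, 0 < t → ‖(t : 𝕜) • (a * R t)‖ ≤ C) (hl : a * l = a) (hp : a * p = l) :
    Tendsto (fun t : ℝ => (t : 𝕜) • (a * R t)) atTop (𝓝 l) := by
  rw [tendsto_iff_norm_sub_tendsto_zero]
  refine squeeze_zero' (Eventually.of_forall fun _ => norm_nonneg _) ?_
    ((tendsto_const_nhds (x := C * ‖p‖)).div_atTop tendsto_id)
  filter_upwards [eventually_gt_atTop 0] with t ht
  rw [smul_mul_resolvent_sub (hR t ht).1 (hR t ht).2 hl hp, norm_neg]
  calc ‖a * R t * p‖ ≤ ‖a * R t‖ * ‖p‖ := norm_mul_le _ _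
    _ ≤ C / t * ‖p‖ := by gcongr; exact norm_le_div_of_norm_smul_le ht (hbdd t ht)
    _ = C * ‖p‖ / t := div_mul_eq_mul_div _ _ _

theorem disjoint_range_ker_of_resolvent {E : Type*} [NormedAddCommGroup E] [NormedSpace 𝕜 E]
    {a : E →L[𝕜] E} {R : ℝ → E →L[𝕜] E} {C : ℝ}
    (hR : ∀ t : ℝ, 0 < t → R t * (1 + (t : 𝕜) • a) = 1)
    (hbdd : ∀ t : ℝ, 0 < t → ‖(t : 𝕜) • (a * R t)‖ ≤ C) :
    Disjoint (LinearMap.range (a : E →ₗ[𝕜] E)) (LinearMap.ker (a : E →ₗ[𝕜] E)) := by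
  rw [Submodule.disjoint_def]
  rintro _ ⟨x, rfl⟩ hx
  change a (a x) = 0 at hx
  have hbound : ∀ t : ℝ, 0 < t → ‖a x‖ ≤ C * ‖x‖ / t := by
    intro t ht
    have hRx : R t x = x - (t : 𝕜) • a x := by
      calc R t x = R t ((1 + (t : 𝕜) • a) (x - (t : 𝕜) • a x)) := by congr 1; simp [hx]
        _ = x - (t : 𝕜) • a x := by
          change (R t * (1 + (t : 𝕜) • a)) _ = _
          rw [hR t ht]; rfl
    have happ : ((t : 𝕜) • (a * R t)) x = (t : 𝕜) • a x := by simp [hRx, hx]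
    refine norm_le_div_of_norm_smul_le (𝕜 := 𝕜) ht ?_
    rw [← happ]
    exact ContinuousLinearMap.le_of_opNorm_le _ (hbdd t ht) x
  exact norm_le_zero_iff.1 <| ge_of_tendsto (tendsto_const_nhds.div_atTop tendsto_id)
    ((eventually_gt_atTop 0).mono hbound)

theorem IsIdempotentElem.one_le_norm {A : Type*} [NormedRing A] {p : A}
    (hp : IsIdempotentElem p) (hp0 : p ≠ 0) : 1 ≤ ‖p‖ := by
  refine (le_mul_iff_one_le_right (norm_pos_iff.2 hp0)).1 ?_
  calc ‖p‖ = ‖p * p‖ := by rw [hp.eq]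
    _ ≤ ‖p‖ * ‖p‖ := norm_mul_le _ _

end BoundedResolvent

section RangeKer

theorem LinearMap.exists_comp_eq_of_range_le {K U V W : Type*} [Field K] [AddCommGroup U]
    [Module K U] [AddCommGroup V] [Module K V] [AddCommGroup W] [Module K W]
    (f : V →ₗ[K] W) (g : U →ₗ[K] W) (h : LinearMap.range g ≤ LinearMap.range f) :
    ∃ p : U →ₗ[K] V, f ∘ₗ p = g := by
  obtain ⟨p, hp⟩ := Module.projective_lifting_property f.rangeRestrict
    (g.codRestrict _ fun x => h (LinearMap.mem_range_self g x)) f.surjective_rangeRestrict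
  exact ⟨p, by ext x; exact congrArg Subtype.val (LinearMap.congr_fun hp x)⟩

theorem LinearMap.isCompl_range_ker_of_disjoint {K V : Type*} [Field K] [AddCommGroup V]
    [Module K V] [FiniteDimensional K V] {φ : V →ₗ[K] V}
    (h : Disjoint (LinearMap.range φ) (LinearMap.ker φ)) :
    IsCompl (LinearMap.range φ) (LinearMap.ker φ) :=
  (Submodule.isCompl_iff_disjoint _ _ (φ.finrank_range_add_finrank_ker).ge).2 h

variable {R V : Type*} [Ring R] [AddCommGroup V] [Module R V] {φ : V →ₗ[R] V}

theorem LinearMap.projection_range_ker_comp_self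
    (hc : IsCompl (LinearMap.range φ) (LinearMap.ker φ)) :
    (LinearMap.range φ).projection (LinearMap.ker φ) hc ∘ₗ φ = φ := by
  ext x
  exact Submodule.projection_apply_of_mem_left hc (LinearMap.mem_range_self φ x)

theorem LinearMap.comp_projection_range_ker
    (hc : IsCompl (LinearMap.range φ) (LinearMap.ker φ)) :
    φ ∘ₗ (LinearMap.range φ).projection (LinearMap.ker φ) hc = φ := by
  ext x
  have := Submodule.sub_projection_mem hc x
  rw [LinearMap.mem_ker, map_sub, sub_eq_zero] at this
  exact this.symm

end RangeKer

section CompletelyPositive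

variable {m : Type*} [Fintype m] [DecidableEq m]

theorem isClosed_setOf_posSemidef {ι : Type*} [Fintype ι] :
    IsClosed {A : Matrix ι ι ℂ | A.PosSemidef} := by
  simp only [Matrix.posSemidef_iff_dotProduct_mulVec, Set.ofPred_and, Set.ofPred_forall]
  refine (isClosed_eq continuous_id.matrix_conjTranspose continuous_id).inter
    (isClosed_iInter fun x => isClosed_le continuous_const ?_)
  exact continuous_const.dotProduct (continuous_id.matrix_mulVec continuous_const)

theorem IsCompletelyPositive.smul {φ : Matrix m m ℂ →ₗ[ℂ] Matrix m m ℂ}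
    (hφ : IsCompletelyPositive φ) {c : ℂ} (hc : 0 ≤ c) : IsCompletelyPositive (c • φ) := by
  intro k A hA
  convert (hφ k A hA).smul hc using 1
  ext p q
  simp

theorem IsCompletelyPositive.of_tendsto {ι : Type*} {l : Filter ι} [l.NeBot]
    {f : ι → Matrix m m ℂ →ₗ[ℂ] Matrix m m ℂ} {L : Matrix m m ℂ →ₗ[ℂ] Matrix m m ℂ}
    (hf : Tendsto (fun i => toC (f i)) l (𝓝 (toC L)))
    (hcp : ∀ᶠ i in l, IsCompletelyPositive (f i)) : IsCompletelyPositive L := by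
  intro k A hA
  have hcont : Continuous fun T : Matrix m m ℂ →L[ℂ] Matrix m m ℂ =>
      Matrix.of fun p q : Fin k × m => T (Matrix.of fun a b => A (p.1, a) (q.1, b)) p.2 q.2 :=
    continuous_matrix fun p q =>
      ((ContinuousLinearMap.apply ℂ _ _).continuous.matrix_elem p.2 q.2)
  exact isClosed_setOf_posSemidef.mem_of_tendsto ((hcont.tendsto _).comp hf)
    (hcp.mono fun i hi => hi k A hA)

end CompletelyPositive

section MatrixMaps

variable {m : Type*} [Fintype m] [DecidableEq m]

theorem toC_injective : Function.Injective (toC (n := m)) :=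
  LinearMap.toContinuousLinearMap.injective

theorem Inv2.unique {f g g' : Matrix m m ℂ →ₗ[ℂ] Matrix m m ℂ} (h : Inv2 f g)
    (h' : Inv2 f g') : g = g' :=
  left_inv_eq_right_inv (M := Module.End ℂ (Matrix m m ℂ)) h.2 h'.1

theorem Inv2.toC_resolvent {φ ψ : Matrix m m ℂ →ₗ[ℂ] Matrix m m ℂ} {c : ℂ}
    (h : Inv2 (LinearMap.id + c • φ) ψ) :
    (1 + c • toC φ) * toC ψ = 1 ∧ toC ψ * (1 + c • toC φ) = 1 :=
  ⟨congrArg toC h.1, congrArg toC h.2⟩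

end MatrixMaps

/-- existence and properties of the limit `L_φ = lim_t tφ(I+tφ)⁻¹`. -/
theorem stmt_1 {n : ℕ} (φ : Matrix (Fin n) (Fin n) ℂ →ₗ[ℂ] Matrix (Fin n) (Fin n) ℂ)
    (hφ0 : φ ≠ 0) (hq : QPositive φ)
    (inv : ℝ → (Matrix (Fin n) (Fin n) ℂ →ₗ[ℂ] Matrix (Fin n) (Fin n) ℂ))
    (hinv : ∀ t : ℝ, 0 ≤ t → Inv2 (LinearMap.id + (t : ℂ) • φ) (inv t))
    (hnorm : ∀ t : ℝ, 0 < t → ‖toC ((t : ℂ) • (φ ∘ₗ inv t))‖ < 1) :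
    ∃ L : Matrix (Fin n) (Fin n) ℂ →ₗ[ℂ] Matrix (Fin n) (Fin n) ℂ,
      Tendsto (fun t : ℝ => toC ((t : ℂ) • (φ ∘ₗ inv t))) atTop (nhds (toC L)) ∧
      (∀ L', Tendsto (fun t : ℝ => toC ((t : ℂ) • (φ ∘ₗ inv t)))
        atTop (nhds (toC L')) → L' = L) ∧
      IsCompletelyPositive L ∧ ‖toC L‖ = 1 ∧
      L ∘ₗ φ = φ ∧ φ ∘ₗ L = φ ∧ L ∘ₗ L = L ∧
      LinearMap.range L = LinearMap.range φ ∧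
      LinearMap.ker L = LinearMap.ker φ := by
  have hres (t : ℝ) (ht : 0 < t) := (hinv t ht.le).toC_resolvent
  have hbdd (t : ℝ) (ht : 0 < t) : ‖(t : ℂ) • (toC φ * toC (inv t))‖ ≤ 1 := (hnorm t ht).le
  have hc : IsCompl (LinearMap.range φ) (LinearMap.ker φ) :=
    LinearMap.isCompl_range_ker_of_disjoint
      (disjoint_range_ker_of_resolvent (fun t ht => (hres t ht).2) hbdd)
  set L := (LinearMap.range φ).projection (LinearMap.ker φ) hc
  have hφL : φ ∘ₗ L = φ := φ.comp_projection_range_ker hc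
  have hLL : L ∘ₗ L = L := Submodule.isIdempotentElem_projection hc
  obtain ⟨P, hP⟩ := φ.exists_comp_eq_of_range_le L (Submodule.range_projection hc).le
  have htend : Tendsto (fun t : ℝ => toC ((t : ℂ) • (φ ∘ₗ inv t))) atTop (𝓝 (toC L)) :=
    tendsto_smul_mul_resolvent hres hbdd (a := toC φ) (l := toC L) (p := toC P)
      (congrArg toC hφL) (congrArg toC hP)
  refine ⟨L, htend, fun L' hL' => toC_injective (tendsto_nhds_unique hL' htend), ?_, ?_,
    φ.projection_range_ker_comp_self hc, hφL, hLL, Submodule.range_projection hc,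
    Submodule.ker_projection hc⟩
  · refine IsCompletelyPositive.of_tendsto htend ((eventually_ge_atTop 0).mono fun t ht => ?_)
    obtain ⟨ψ, hψ, hcp⟩ := hq.2 t ht
    rw [hψ.unique (hinv t ht)] at hcp
    exact hcp.smul (Complex.zero_le_real.2 ht)
  · have hL0 : toC L ≠ 0 := fun h => hφ0 <| by
      rw [← hφL, toC_injective (h : toC L = toC 0), LinearMap.comp_zero]
    exact le_antisymm
      (le_of_tendsto htend.norm ((eventually_gt_atTop 0).mono fun t ht => (hnorm t ht).le))
      (IsIdempotentElem.one_le_norm (p := toC L) (congrArg toC hLL) hL0)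
end
end

section
/- Let Φ : M₂(ℂ) → M₂(ℂ) be a unital completely positive map with Φ² = Φ. Then, up to conjugation by a unitary (i.e., replacing Φ by A ↦ U*Φ(UAU*)U for a unitary U), Φ has one of the following forms: (i) Φ(A) = ρ(A)I for a state ρ on M₂(ℂ); (ii) Φ is the diagonal map Φ(A) = a₁₁e₁₁ + a₂₂e₂₂; (iii) Φ is the identity map. -/
open Matrix Filter
open scoped Matrix.Norms.L2Operator ComplexOrder

noncomputable section

/-!
The range of an idempotent `Φ` is its fixed-point space, and complete positivity makes `Φ`
commute with `ᴴ`, so that space is spanned by Hermitian fixed points. If all of these are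
scalar, `Φ` takes scalar values and `A ↦ Φ(A)₁₁` is a state. Otherwise a non-scalar Hermitian
fixed point, diagonalised by a unitary `U`, shows together with `Φ(1) = 1` that
`Ψ = U* Φ(U · U*) U` fixes `e₁₁` and `e₂₂`. The Choi matrix of `Ψ` is positive semidefinite and
its diagonal entries `Ψ(e₁₁)₂₂`, `Ψ(e₂₂)₁₁` vanish, which forces `Ψ(e₁₂) = β e₁₂`; hence `Ψ` is
Schur multiplication by `[[1, β], [β̄, 1]]`, and idempotence gives `β ∈ {0, 1}`.
-/

open scoped Kronecker

section

variable {n : Type*}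

lemma Matrix.PosSemidef.apply_eq_zero_of_diag_eq_zero {M : Matrix n n ℂ} (hM : M.PosSemidef)
    {p : n} (hp : M p p = 0) (q : n) : M p q = 0 := by
  have hdet := (hM.submatrix ![p, q]).det_nonneg
  have hqp : M q p = star (M p q) := (hM.1.apply q p).symm
  rw [det_fin_two] at hdet
  simp only [submatrix_apply, Matrix.cons_val_zero, Matrix.cons_val_one, hp, zero_mul, hqp,
    Complex.star_def, Complex.mul_conj, zero_sub] at hdet
  have : Complex.normSq (M p q) ≤ 0 := by exact_mod_cast neg_nonneg.mp hdet
  exact Complex.normSq_eq_zero.mp (le_antisymm this (Complex.normSq_nonneg _))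

variable [Fintype n]

lemma block_one_kronecker_mul_mul_conjTranspose (U : Matrix n n ℂ) {k : ℕ}
    (A : Matrix (Fin k × n) (Fin k × n) ℂ) (i j : Fin k) :
    (of fun a b => (((1 : Matrix (Fin k) (Fin k) ℂ) ⊗ₖ U) * A *
      ((1 : Matrix (Fin k) (Fin k) ℂ) ⊗ₖ U)ᴴ) (i, a) (j, b)) =
      U * (of fun a b => A (i, a) (j, b)) * Uᴴ := by
  ext a b
  simp [Matrix.mul_apply, Matrix.kroneckerMap_apply, Matrix.one_apply, Fintype.sum_prod_type,
    Finset.sum_mul, ite_mul, Matrix.conjTranspose_apply, apply_ite]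

variable [DecidableEq n]

lemma conjMap_apply (φ : Matrix n n ℂ →ₗ[ℂ] Matrix n n ℂ) (U A : Matrix n n ℂ) :
    conjMap φ U A = Uᴴ * φ (U * A * Uᴴ) * U := rfl

lemma IsCompletelyPositive.conjMap {φ : Matrix n n ℂ →ₗ[ℂ] Matrix n n ℂ}
    (hφ : IsCompletelyPositive φ) (U : Matrix n n ℂ) : IsCompletelyPositive (conjMap φ U) := by
  intro k A hA
  set W : Matrix (Fin k × n) (Fin k × n) ℂ := (1 : Matrix (Fin k) (Fin k) ℂ) ⊗ₖ U
  convert (hφ k _ (hA.mul_mul_conjTranspose_same W)).conjTranspose_mul_mul_same W using 1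
  ext p q
  simp only [W, block_one_kronecker_mul_mul_conjTranspose]
  simp [conjMap_apply, Matrix.mul_apply, Matrix.kroneckerMap_apply, Matrix.one_apply,
    Fintype.sum_prod_type, Matrix.conjTranspose_apply, apply_ite, ite_mul, Finset.sum_mul]

lemma IsCompletelyPositive.posSemidef_apply {φ : Matrix n n ℂ →ₗ[ℂ] Matrix n n ℂ}
    (hφ : IsCompletelyPositive φ) {A : Matrix n n ℂ} (hA : A.PosSemidef) : (φ A).PosSemidef :=
  (hφ 1 _ (hA.submatrix Prod.snd)).submatrix (fun i => (0, i))

def choiMatrix (φ : Matrix n n ℂ →ₗ[ℂ] Matrix n n ℂ) : Matrix (n × n) (n × n) ℂ :=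
  of fun p q => φ (single p.1 q.1 1) p.2 q.2

lemma IsCompletelyPositive.choiMatrix_posSemidef {φ : Matrix n n ℂ →ₗ[ℂ] Matrix n n ℂ}
    (hφ : IsCompletelyPositive φ) : (choiMatrix φ).PosSemidef := by
  -- `v` is the unnormalised maximally entangled vector `∑ᵢ eᵢ ⊗ eᵢ`.
  set e := Fintype.equivFin n
  set v : Fin (Fintype.card n) × n → ℂ := fun p => if e.symm p.1 = p.2 then 1 else 0
  convert (hφ _ _ (posSemidef_vecMulVec_self_star v)).submatrix (Prod.map e id) using 1
  ext ⟨i, a⟩ ⟨j, b⟩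
  refine congrFun (congrFun (congrArg φ ?_) a) b
  ext c d
  simp only [v, vecMulVec, single, of_apply, Pi.star_apply, Prod.map_fst,
    Equiv.symm_apply_apply]
  split_ifs <;> simp_all

lemma map_eq_sum_smul_single (φ : Matrix n n ℂ →ₗ[ℂ] Matrix n n ℂ) (A : Matrix n n ℂ) :
    φ A = ∑ i, ∑ j, A i j • φ (single i j 1) := by
  conv_lhs => rw [matrix_eq_sum_single A]
  simp only [map_sum]
  refine Finset.sum_congr rfl fun i _ => Finset.sum_congr rfl fun j _ => ?_
  rw [← map_smul, smul_single, smul_eq_mul, mul_one]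

lemma IsCompletelyPositive.map_conjTranspose {φ : Matrix n n ℂ →ₗ[ℂ] Matrix n n ℂ}
    (hφ : IsCompletelyPositive φ) (A : Matrix n n ℂ) : φ Aᴴ = (φ A)ᴴ := by
  have hchoi := hφ.choiMatrix_posSemidef.1
  have h : ∀ i j a b, φ (single j i 1) b a = star (φ (single i j 1) a b) := fun i j a b =>
    (congrFun (congrFun hchoi (j, b)) (i, a)).symm
  ext a b
  rw [conjTranspose_apply, map_eq_sum_smul_single φ Aᴴ, map_eq_sum_smul_single φ A]
  simp only [Matrix.sum_apply, Matrix.smul_apply, conjTranspose_apply, star_sum, smul_eq_mul,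
    star_mul', ← h]
  exact Finset.sum_comm

lemma conjMap_one (φ : Matrix n n ℂ →ₗ[ℂ] Matrix n n ℂ) : conjMap φ 1 = φ := by
  ext A : 1
  simp [conjMap_apply]

lemma conjTranspose_mul_mul_conjTranspose_mul {U : Matrix n n ℂ} (hU : U ∈ unitaryGroup n ℂ)
    (A : Matrix n n ℂ) : Uᴴ * (U * A * Uᴴ) * U = A := calc
  _ = (Uᴴ * U) * A * (Uᴴ * U) := by simp only [Matrix.mul_assoc]
  _ = A := by
    rw [show Uᴴ * U = 1 from mem_unitaryGroup_iff'.mp hU, Matrix.one_mul, Matrix.mul_one]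

lemma conjMap_apply_eq_self {U : Matrix n n ℂ} (hU : U ∈ unitaryGroup n ℂ)
    {φ : Matrix n n ℂ →ₗ[ℂ] Matrix n n ℂ} {A : Matrix n n ℂ}
    (hA : φ (U * A * Uᴴ) = U * A * Uᴴ) : conjMap φ U A = A := by
  rw [conjMap_apply, hA, conjTranspose_mul_mul_conjTranspose_mul hU]

lemma conjMap_apply_one {U : Matrix n n ℂ} (hU : U ∈ unitaryGroup n ℂ)
    {φ : Matrix n n ℂ →ₗ[ℂ] Matrix n n ℂ} (hφ : φ 1 = 1) : conjMap φ U 1 = 1 :=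
  conjMap_apply_eq_self hU <| by
    rw [Matrix.mul_one, show U * Uᴴ = 1 from mem_unitaryGroup_iff.mp hU, hφ]

lemma conjMap_apply_conjMap {U : Matrix n n ℂ} (hU : U ∈ unitaryGroup n ℂ)
    (φ ψ : Matrix n n ℂ →ₗ[ℂ] Matrix n n ℂ) (A : Matrix n n ℂ) :
    conjMap φ U (conjMap ψ U A) = conjMap (φ ∘ₗ ψ) U A := by
  have h := conjTranspose_mul_mul_conjTranspose_mul (Unitary.star_mem hU) (ψ (U * A * Uᴴ))
  rw [star_eq_conjTranspose, conjTranspose_conjTranspose] at h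
  rw [conjMap_apply ψ, conjMap_apply, h]
  rfl

lemma exists_eq_smul_one_of_isHermitian_fixed {φ : Matrix n n ℂ →ₗ[ℂ] Matrix n n ℂ}
    (hidem : ∀ A, φ (φ A) = φ A) (hstar : ∀ A, φ Aᴴ = (φ A)ᴴ)
    (hfix : ∀ H, H.IsHermitian → φ H = H → ∃ c : ℂ, H = c • 1) (A : Matrix n n ℂ) :
    ∃ c : ℂ, φ A = c • 1 := by
  set X := φ A
  have hX : φ X = X := hidem A
  have hXstar : φ (star X) = star X := by rw [star_eq_conjTranspose, hstar, hX]
  obtain ⟨a, ha⟩ := hfix (realPart X) (realPart X).2.isHermitian (by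
    rw [realPart_apply_coe, LinearMap.map_smul_of_tower, map_add, hX, hXstar])
  obtain ⟨b, hb⟩ := hfix (imaginaryPart X) (imaginaryPart X).2.isHermitian (by
    rw [imaginaryPart_apply_coe, map_smul, LinearMap.map_smul_of_tower, map_sub, hX, hXstar])
  exact ⟨a + Complex.I * b, by
    rw [← realPart_add_I_smul_imaginaryPart X, ha, hb, add_smul, mul_smul]⟩

lemma IsCompletelyPositive.exists_isState {φ : Matrix n n ℂ →ₗ[ℂ] Matrix n n ℂ}
    (hφ : IsCompletelyPositive φ) (hunital : φ 1 = 1) (i : n)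
    (hscalar : ∀ A, ∃ c : ℂ, φ A = c • 1) :
    ∃ ρ : Matrix n n ℂ →ₗ[ℂ] ℂ, IsState ρ ∧ ∀ A, φ A = ρ A • 1 := by
  refine ⟨entryLinearMap ℂ ℂ i i ∘ₗ φ, ⟨by simp [hunital], fun A hA => ?_⟩, fun A => ?_⟩
  · have h := Complex.nonneg_iff.mp ((hφ.posSemidef_apply hA).diag_nonneg (i := i))
    exact ⟨(φ A i i).re, h.1, Complex.ext rfl (by simp [← h.2])⟩
  · obtain ⟨c, hc⟩ := hscalar A
    simp [hc]

end

local notation "M₂" => Matrix (Fin 2) (Fin 2) ℂ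

lemma exists_unitary_diagonal_of_ne_smul_one {H : M₂} (hH : H.IsHermitian)
    (hns : ∀ c : ℂ, H ≠ c • 1) :
    ∃ U ∈ unitaryGroup (Fin 2) ℂ, ∃ d : Fin 2 → ℂ, d 0 ≠ d 1 ∧ H = U * diagonal d * Uᴴ := by
  set U : M₂ := (hH.eigenvectorUnitary : M₂)
  set d : Fin 2 → ℂ := RCLike.ofReal ∘ hH.eigenvalues
  have hspec : H = U * diagonal d * Uᴴ := hH.spectral_theorem
  refine ⟨U, hH.eigenvectorUnitary.2, d, fun hd => hns (d 0) ?_, hspec⟩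
  have hD : diagonal d = d 0 • (1 : M₂) := by
    ext i j
    fin_cases i <;> fin_cases j <;> simp [hd]
  calc H = U * diagonal d * Uᴴ := hspec
    _ = d 0 • (U * Uᴴ) := by rw [hD, Matrix.mul_smul, Matrix.mul_one, Matrix.smul_mul]
    _ = d 0 • 1 := by rw [show U * Uᴴ = 1 from mem_unitaryGroup_iff.mp hH.eigenvectorUnitary.2]

lemma map_single_zero_zero_of_map_diagonal {Ψ : M₂ →ₗ[ℂ] M₂} (hunital : Ψ 1 = 1)
    {d : Fin 2 → ℂ} (hd : d 0 ≠ d 1) (hfix : Ψ (diagonal d) = diagonal d) :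
    Ψ (single 0 0 1) = single 0 0 1 := by
  have he : single 0 0 1 = (d 0 - d 1)⁻¹ • (diagonal d - d 1 • (1 : M₂)) := by
    ext i j
    fin_cases i <;> fin_cases j <;> simp [inv_mul_cancel₀ (sub_ne_zero.mpr hd)]
  rw [he, map_smul, map_sub, map_smul, hfix, hunital]

lemma IsCompletelyPositive.exists_map_single_zero_one_eq_smul {Ψ : M₂ →ₗ[ℂ] M₂}
    (hΨ : IsCompletelyPositive Ψ) (h00 : Ψ (single 0 0 1) = single 0 0 1)
    (h11 : Ψ (single 1 1 1) = single 1 1 1) :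
    ∃ β : ℂ, Ψ (single 0 1 1) = β • single 0 1 1 := by
  have hC := hΨ.choiMatrix_posSemidef
  have hrow : ∀ b, Ψ (single 0 1 1) 1 b = 0 := fun b =>
    hC.apply_eq_zero_of_diag_eq_zero (p := (0, 1)) (by simp [choiMatrix, h00]) (1, b)
  have hcol : ∀ a, Ψ (single 0 1 1) a 0 = 0 := fun a => by
    have h := hC.apply_eq_zero_of_diag_eq_zero (p := (1, 0)) (by simp [choiMatrix, h11]) (0, a)
    rw [← hC.1.apply] at h
    simpa [choiMatrix] using h
  refine ⟨Ψ (single 0 1 1) 0 1, ?_⟩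
  ext a b
  fin_cases a <;> fin_cases b <;> simp [hrow, hcol]

lemma eq_diagonal_or_eq_self_of_map_single_zero_zero {Ψ : M₂ →ₗ[ℂ] M₂}
    (hunital : Ψ 1 = 1) (hΨ : IsCompletelyPositive Ψ) (hidem : ∀ A, Ψ (Ψ A) = Ψ A)
    (h00 : Ψ (single 0 0 1) = single 0 0 1) :
    (∀ A, Ψ A = diagonal fun i => A i i) ∨ ∀ A, Ψ A = A := by
  have h11 : Ψ (single 1 1 1) = single 1 1 1 := by
    have h1 : (1 : M₂) = single 0 0 1 + single 1 1 1 := by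
      ext i j
      fin_cases i <;> fin_cases j <;> simp
    rw [eq_sub_of_add_eq' h1.symm, map_sub, hunital, h00]
  obtain ⟨β, h01⟩ := hΨ.exists_map_single_zero_one_eq_smul h00 h11
  have h10 : Ψ (single 1 0 1) = star β • single 1 0 1 := by
    simpa [conjTranspose_single, h01] using hΨ.map_conjTranspose (single 0 1 1)
  have hβ : IsIdempotentElem β := by
    have h := hidem (single 0 1 1)
    rw [h01, map_smul, h01, smul_smul] at h
    exact (by simpa using congrFun (congrFun h 0) 1 : β * β = β)
  have hexp : ∀ A, Ψ A = of ![![A 0 0, β * A 0 1], ![star β * A 1 0, A 1 1]] := fun A => by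
    rw [map_eq_sum_smul_single Ψ A]
    ext i j
    fin_cases i <;> fin_cases j <;> simp [Fin.sum_univ_two, h00, h01, h10, h11, mul_comm]
  rcases IsIdempotentElem.iff_eq_zero_or_one.mp hβ with rfl | rfl
  · exact Or.inl fun A => by ext i j; fin_cases i <;> fin_cases j <;> simp [hexp]
  · exact Or.inr fun A => by ext i j; fin_cases i <;> fin_cases j <;> simp [hexp]

/-- classification of unital completely positive idempotents on
`M₂(ℂ)` up to unitary conjugation. -/
theorem stmt_5
    (Φ : Matrix (Fin 2) (Fin 2) ℂ →ₗ[ℂ] Matrix (Fin 2) (Fin 2) ℂ)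
    (hunital : Φ 1 = 1) (hcp : IsCompletelyPositive Φ) (hidem : Φ ∘ₗ Φ = Φ) :
    ∃ U ∈ Matrix.unitaryGroup (Fin 2) ℂ,
      (∃ ρ : Matrix (Fin 2) (Fin 2) ℂ →ₗ[ℂ] ℂ, IsState ρ ∧
        ∀ A, conjMap Φ U A = ρ A • (1 : Matrix (Fin 2) (Fin 2) ℂ)) ∨
      (∀ A, conjMap Φ U A = Matrix.diagonal fun i => A i i) ∨
      (∀ A, conjMap Φ U A = A) := by
  have hidem' : ∀ A, Φ (Φ A) = Φ A := LinearMap.congr_fun hidem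
  by_cases hfix : ∀ H : M₂, H.IsHermitian → Φ H = H → ∃ c : ℂ, H = c • 1
  · obtain ⟨ρ, hρ, hΦ⟩ := hcp.exists_isState hunital 0
      (exists_eq_smul_one_of_isHermitian_fixed hidem' hcp.map_conjTranspose hfix)
    exact ⟨1, one_mem _, Or.inl ⟨ρ, hρ, by simpa [conjMap_one] using hΦ⟩⟩
  push Not at hfix
  obtain ⟨H, hH, hΦH, hns⟩ := hfix
  obtain ⟨U, hU, d, hd, rfl⟩ := exists_unitary_diagonal_of_ne_smul_one hH hns
  have hΨ1 := conjMap_apply_one hU hunital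
  have hΨ00 := map_single_zero_zero_of_map_diagonal hΨ1 hd (conjMap_apply_eq_self hU hΦH)
  have hΨidem : ∀ A, conjMap Φ U (conjMap Φ U A) = conjMap Φ U A := fun A => by
    rw [conjMap_apply_conjMap hU, hidem]
  exact ⟨U, hU, Or.inr
    (eq_diagonal_or_eq_self_of_map_single_zero_zero hΨ1 (hcp.conjMap U) hΨidem hΨ00)⟩
end
end

section
/- Let K be a separable Hilbert space and φ : B(K) → B(K) a normal unital completely positive map. Suppose φ(E) = E for a projection E, and let F = I − E. Then for all A ∈ B(K), φ(A) = Eφ(EAE)E + Eφ(EAF)F + Fφ(FAE)E + Fφ(FAF)F. -/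
open Matrix Filter
open scoped Matrix.Norms.L2Operator ComplexOrder

noncomputable section

/-!
The Kraus operators `Sᵢ` of `φ` commute with `E`. Compressing `Σ Sᵢ E Sᵢ* = E` by `F` gives
`Σ (F Sᵢ E)(F Sᵢ E)* = F E F = 0`, a vanishing sum of positive operators, so `F Sᵢ E = 0`;
unitality gives `Σ Sᵢ F Sᵢ* = F` and in the same way `E Sᵢ F = 0`. Hence `φ(P A Q) = P φ(A) Q`
for `P, Q ∈ {E, F}`, and the formula is the block decomposition `X = Σ P X Q` of `X = φ(A)`.
-/

section CStarAlgebra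

variable {A ι : Type*} [CStarAlgebra A] [PartialOrder A] [StarOrderedRing A]

theorem eq_zero_of_hasSum_mul_star_eq_zero {T : ι → A}
    (hT : HasSum (fun i => T i * star (T i)) 0) (i : ι) : T i = 0 := by
  have hle : T i * star (T i) ≤ 0 := le_hasSum hT i fun j _ => mul_star_self_nonneg (T j)
  exact (CStarRing.mul_star_self_eq_zero_iff _).mp
    (le_antisymm hle (mul_star_self_nonneg (T i)))

theorem IsStarProjection.mul_mul_eq_zero_of_hasSum {S : ι → A} {p q : A}
    (hp : IsStarProjection p) (hq : IsSelfAdjoint q) (hqp : q * p = 0)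
    (hS : HasSum (fun i => S i * p * star (S i)) p) (i : ι) : q * S i * p = 0 := by
  have hconj : ∀ j, q * (S j * p * star (S j)) * q = q * S j * p * star (q * S j * p) := by
    intro j
    simp only [star_mul, hp.isSelfAdjoint.star_eq, hq.star_eq, mul_assoc]
    rw [← mul_assoc p p, hp.isIdempotentElem.eq]
  refine eq_zero_of_hasSum_mul_star_eq_zero (T := fun j => q * S j * p) ?_ i
  simpa only [hconj, hqp, zero_mul] using (hS.mul_left q).mul_right q

theorem IsStarProjection.commute_of_hasSum {S : ι → A} {p : A} (hp : IsStarProjection p)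
    (hS : HasSum (fun i => S i * p * star (S i)) p)
    (hS₁ : HasSum (fun i => S i * star (S i)) 1) (i : ι) : Commute (S i) p := by
  have hS' : HasSum (fun i => S i * (1 - p) * star (S i)) (1 - p) := by
    simpa only [mul_sub, sub_mul, mul_one] using hS₁.sub hS
  have hright : (1 - p) * S i * p = 0 :=
    hp.mul_mul_eq_zero_of_hasSum hp.one_sub.isSelfAdjoint hp.one_sub_mul_self hS i
  have hleft : p * S i * (1 - p) = 0 :=
    hp.one_sub.mul_mul_eq_zero_of_hasSum hp.isSelfAdjoint hp.mul_one_sub_self hS' i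
  rw [sub_mul, one_mul, sub_mul, sub_eq_zero] at hright
  rw [mul_sub, mul_one, sub_eq_zero] at hleft
  exact hright.trans hleft.symm

end CStarAlgebra

section KrausMap

variable {A ι : Type*} [Ring A] [StarRing A] [TopologicalSpace A] [IsTopologicalRing A]
  [T2Space A] {φ : A → A} {S : ι → A}

theorem map_mul_mul_of_commute (hφ : ∀ a, HasSum (fun i => S i * a * star (S i)) (φ a))
    {p q : A} (hp : ∀ i, Commute (S i) p) (hq : ∀ i, Commute (S i) q) (hq' : IsSelfAdjoint q)
    (a : A) : φ (p * a * q) = p * φ a * q := by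
  have hq_star : ∀ i, Commute (star (S i)) q := fun i => by
    simpa only [hq'.star_eq] using (hq i).star_star
  have hterm : ∀ i, S i * (p * a * q) * star (S i) = p * (S i * a * star (S i)) * q := by
    intro i
    calc S i * (p * a * q) * star (S i) = S i * p * a * (q * star (S i)) := by
          simp only [mul_assoc]
      _ = p * S i * a * (star (S i) * q) := by rw [(hp i).eq, (hq_star i).eq]
      _ = p * (S i * a * star (S i)) * q := by simp only [mul_assoc]
  refine (hφ _).unique ?_
  simpa only [hterm] using ((hφ a).mul_left p).mul_right q

theorem mul_map_mul_mul_of_commute (hφ : ∀ a, HasSum (fun i => S i * a * star (S i)) (φ a))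
    {p q : A} (hp : ∀ i, Commute (S i) p) (hq : ∀ i, Commute (S i) q)
    (hp' : IsIdempotentElem p) (hq' : IsStarProjection q) (a : A) :
    p * φ (p * a * q) * q = p * φ a * q := by
  rw [map_mul_mul_of_commute hφ hp hq hq'.isSelfAdjoint]
  calc p * (p * φ a * q) * q = (p * p) * φ a * (q * q) := by simp only [mul_assoc]
    _ = p * φ a * q := by rw [hp'.eq, hq'.isIdempotentElem.eq]

end KrausMap

theorem eq_add_add_add_mul_one_sub {R : Type*} [Ring R] (p a : R) :
    a = p * a * p + p * a * (1 - p) + (1 - p) * a * p + (1 - p) * a * (1 - p) := by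
  noncomm_ring

theorem stmt_10_general {K : Type*} [NormedAddCommGroup K] [InnerProductSpace ℂ K]
    [CompleteSpace K]
    (φ : (K →L[ℂ] K) → (K →L[ℂ] K)) (S : ℕ → K →L[ℂ] K)
    (hKraus : ∀ A, HasSum (fun i => S i * A * star (S i)) (φ A))
    (hunital : φ 1 = 1)
    (E : K →L[ℂ] K) (hE1 : star E = E) (hE2 : E * E = E) (hfix : φ E = E) :
    ∀ A, φ A =
      E * φ (E * A * E) * E + E * φ (E * A * (1 - E)) * (1 - E) +
      (1 - E) * φ ((1 - E) * A * E) * E +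
      (1 - E) * φ ((1 - E) * A * (1 - E)) * (1 - E) := by
  intro A
  have hE : IsStarProjection E := ⟨hE2, hE1⟩
  have hSE : ∀ i, Commute (S i) E :=
    hE.commute_of_hasSum (by simpa only [hfix] using hKraus E)
      (by simpa only [hunital, mul_one] using hKraus 1)
  have hSF : ∀ i, Commute (S i) (1 - E) := fun i => (Commute.one_right _).sub_right (hSE i)
  rw [mul_map_mul_mul_of_commute hKraus hSE hSE hE.isIdempotentElem hE,
    mul_map_mul_mul_of_commute hKraus hSE hSF hE.isIdempotentElem hE.one_sub,
    mul_map_mul_mul_of_commute hKraus hSF hSE hE.one_sub.isIdempotentElem hE,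
    mul_map_mul_mul_of_commute hKraus hSF hSF hE.one_sub.isIdempotentElem hE.one_sub]
  exact eq_add_add_add_mul_one_sub E (φ A)

/-- a normal unital CP map fixing a projection `E` decomposes
blockwise with respect to `E` and `F = I - E`. -/
theorem stmt_10 {K : Type*} [NormedAddCommGroup K] [InnerProductSpace ℂ K]
    [CompleteSpace K] [TopologicalSpace.SeparableSpace K]
    (φ : (K →L[ℂ] K) → (K →L[ℂ] K)) (S : ℕ → K →L[ℂ] K)
    (hKraus : ∀ A, HasSum (fun i => S i * A * star (S i)) (φ A))
    (hunital : φ 1 = 1)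
    (E : K →L[ℂ] K) (hE1 : star E = E) (hE2 : E * E = E) (hfix : φ E = E) :
    ∀ A, φ A =
      E * φ (E * A * E) * E + E * φ (E * A * (1 - E)) * (1 - E) +
      (1 - E) * φ ((1 - E) * A * E) * E +
      (1 - E) * φ ((1 - E) * A * (1 - E)) * (1 - E) :=
  stmt_10_general φ S hKraus hunital E hE1 hE2 hfix
end
end

section
/- Let Θ : M₄(ℂ) → M₄(ℂ) be a completely positive map of block form Θ([[A,B],[C,D]]) = [[φ₂(A), γ(B)],[γ*(C), φ₃(D)]] where φ₂ : M₂(ℂ) → M₂(ℂ) is the diagonal map φ₂(A) = a₁₁e₁₁ + a₂₂e₂₂ and φ₃ : M₂(ℂ) → M₂(ℂ) is a unital Schur map. Then γ : M₂(ℂ) → M₂(ℂ) is a Schur map, i.e., γ(e_{ij}) is a scalar multiple of e_{ij} for all i,j. -/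
open Matrix Filter
open scoped Matrix.Norms.L2Operator ComplexOrder

noncomputable section

/-! Apply `Θ` to the positive rank-one matrix with blocks `eᵢᵢ, eᵢⱼ, eⱼᵢ, eⱼⱼ`. Its image is positive
semidefinite, and in such a matrix a zero diagonal entry forces its whole row and column to vanish.
Since `diagMap eᵢᵢ` and the Schur image of `eⱼⱼ` vanish on the diagonal away from `(i, i)` and
`(j, j)`, the off-diagonal block `γ eᵢⱼ` vanishes away from `(i, j)`, which makes `γ` a Schur map. -/

namespace Matrix.PosSemidef

variable {𝕜 n : Type*} [RCLike 𝕜] [Fintype n] [DecidableEq n] {M : Matrix n n 𝕜}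

theorem apply_eq_zero_of_apply_self_eq_zero_right (hM : M.PosSemidef) {r : n} (h : M r r = 0)
    (s : n) : M s r = 0 := by
  have hcol : M *ᵥ Pi.single r 1 = 0 :=
    (hM.dotProduct_mulVec_zero_iff _).mp (by simp [mulVec_single, h])
  simpa [mulVec_single] using congrFun hcol s

theorem apply_eq_zero_of_apply_self_eq_zero_left (hM : M.PosSemidef) {r : n} (h : M r r = 0)
    (s : n) : M r s = 0 := by
  rw [← hM.1.apply r s, hM.apply_eq_zero_of_apply_self_eq_zero_right h s, star_zero]

end Matrix.PosSemidef

theorem IsCompletelyPositive.posSemidef_apply_s18 {n : Type*} [Fintype n] [DecidableEq n]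
    {Θ : Matrix n n ℂ →ₗ[ℂ] Matrix n n ℂ} (hΘ : IsCompletelyPositive Θ)
    {P : Matrix n n ℂ} (hP : P.PosSemidef) : (Θ P).PosSemidef :=
  (hΘ 1 (P.submatrix Prod.snd Prod.snd) (hP.submatrix _)).submatrix fun x => ((0 : Fin 1), x)

section cornerMap

variable {n k : Type*} [Fintype n] [Fintype k] [DecidableEq n] [DecidableEq k]
  {φ : Matrix n n ℂ →ₗ[ℂ] Matrix n n ℂ} {Ψ : Matrix k k ℂ →ₗ[ℂ] Matrix k k ℂ}
  {σ : Matrix n k ℂ →ₗ[ℂ] Matrix n k ℂ}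

theorem cornerMap_fromBlocks (A : Matrix n n ℂ) (B : Matrix n k ℂ) (C : Matrix k n ℂ)
    (D : Matrix k k ℂ) :
    cornerMap φ Ψ σ (fromBlocks A B C D) = fromBlocks (φ A) (σ B) (σ Cᴴ)ᴴ (Ψ D) := rfl

theorem posSemidef_fromBlocks_single (i : n) (j : k) :
    (fromBlocks (single i i (1 : ℂ)) (single i j 1) (single j i 1) (single j j 1)).PosSemidef := by
  convert posSemidef_vecMulVec_self_star (Sum.elim (Pi.single i (1 : ℂ)) (Pi.single j 1))
  ext (a | a) (b | b) <;> simp [vecMulVec, single, Pi.single_apply, ← ite_and, eq_comm, and_comm]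

theorem IsCompletelyPositive.cornerMap_single_apply_eq_zero
    (hΘ : IsCompletelyPositive (cornerMap φ Ψ σ)) {i a : n} {j b : k}
    (h : φ (single i i 1) a a = 0 ∨ Ψ (single j j 1) b b = 0) : σ (single i j 1) a b = 0 := by
  have hP := hΘ.posSemidef_apply_s18 (posSemidef_fromBlocks_single i j)
  rw [cornerMap_fromBlocks] at hP
  rcases h with ha | hb
  · exact hP.apply_eq_zero_of_apply_self_eq_zero_left (r := Sum.inl a) ha (Sum.inr b)
  · exact hP.apply_eq_zero_of_apply_self_eq_zero_right (r := Sum.inr b) hb (Sum.inl a)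

end cornerMap

theorem Matrix.smul_single_one {R m n : Type*} [MulZeroOneClass R] [DecidableEq m] [DecidableEq n]
    (i : m) (j : n) (c : R) :
    c • single i j 1 = single i j c := by
  rw [smul_single, smul_eq_mul, mul_one]

theorem Matrix.exists_hadamard_eq_of_single_apply_eq_zero {R m n : Type*} [CommSemiring R]
    [Fintype m] [Fintype n] [DecidableEq m] [DecidableEq n]
    (γ : Matrix m n R →ₗ[R] Matrix m n R)
    (h : ∀ i j a b, a ≠ i ∨ b ≠ j → γ (single i j 1) a b = 0) :
    ∃ Y : Matrix m n R, ∀ A, γ A = hadamard Y A := by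
  refine ⟨of fun i j => γ (single i j 1) i j, fun A => ?_⟩
  ext a b
  have hsingle : ∀ i j, γ (single i j (A i j)) a b = A i j * γ (single i j 1) a b := by
    intro i j
    rw [← smul_single_one, map_smul, smul_apply, smul_eq_mul]
  conv_lhs => rw [matrix_eq_sum_single A]
  simp only [map_sum, sum_apply, hsingle]
  rw [Fintype.sum_eq_single a fun i hi => Finset.sum_eq_zero fun j _ => by
      rw [h i j a b (.inl (Ne.symm hi)), mul_zero],
    Fintype.sum_eq_single b fun j hj => by rw [h a j a b (.inr (Ne.symm hj)), mul_zero]]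
  simp [hadamard, mul_comm]

theorem stmt_18_general
    (φ₃ : Matrix (Fin 2) (Fin 2) ℂ →ₗ[ℂ] Matrix (Fin 2) (Fin 2) ℂ)
    (W : Matrix (Fin 2) (Fin 2) ℂ) (hφ₃ : ∀ A, φ₃ A = Matrix.hadamard W A)
    (γ : Matrix (Fin 2) (Fin 2) ℂ →ₗ[ℂ] Matrix (Fin 2) (Fin 2) ℂ)
    (hcp : IsCompletelyPositive (cornerMap diagMap φ₃ γ)) :
    ∃ Y : Matrix (Fin 2) (Fin 2) ℂ, ∀ A, γ A = Matrix.hadamard Y A := by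
  refine exists_hadamard_eq_of_single_apply_eq_zero γ fun i j a b hab =>
    hcp.cornerMap_single_apply_eq_zero ?_
  rcases hab with ha | hb
  · left
    show diagonal (fun l => single i i (1 : ℂ) l l) a a = 0
    simp [single, ha.symm]
  · right
    simp [hφ₃, hadamard, single, hb.symm]

/-- a corner from the diagonal map to a unital Schur map is a
Schur map. -/
theorem stmt_18
    (φ₃ : Matrix (Fin 2) (Fin 2) ℂ →ₗ[ℂ] Matrix (Fin 2) (Fin 2) ℂ)
    (W : Matrix (Fin 2) (Fin 2) ℂ) (hφ₃ : ∀ A, φ₃ A = Matrix.hadamard W A)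
    (hφ₃u : φ₃ 1 = 1)
    (γ : Matrix (Fin 2) (Fin 2) ℂ →ₗ[ℂ] Matrix (Fin 2) (Fin 2) ℂ)
    (hcp : IsCompletelyPositive (cornerMap diagMap φ₃ γ)) :
    ∃ Y : Matrix (Fin 2) (Fin 2) ℂ, ∀ A, γ A = Matrix.hadamard Y A :=
  stmt_18_general φ₃ W hφ₃ γ hcp
end
end
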